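/- Suppose a function χ ∈ OR is Lebesgue integrable over [1,∞). Then χ is bounded on [1,∞), and t·χ(t) → 0 as t → ∞. -/

import Mathlib

open MeasureTheory Filter Set

/-- A Borel measurable function `χ : [1,∞) → (0,∞)` is OR-varying at infinity:
there exist `a > 1` and `c ≥ 1` with `c⁻¹ ≤ χ(λt)/χ(t) ≤ c` for all `t ≥ 1`, `λ ∈ [1,a]`. -/
def ORClass (χ : ℝ → ℝ) : Prop :=
  Measurable χ ∧ (∀ t, 1 ≤ t → 0 < χ t) ∧
    ∃ a > 1, ∃ c ≥ 1, ∀ t, 1 ≤ t → ∀ l, 1 ≤ l → l ≤ a →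
      c⁻¹ ≤ χ (l * t) / χ t ∧ χ (l * t) / χ t ≤ c

/-!
The lower OR bound gives `χ s ≥ χ t / c` on the window `[t, a t]`, whose length is `(a - 1) t`.
Hence `t χ(t) ≤ c / (a - 1) · ∫_t^{at} χ ≤ c / (a - 1) · ∫_t^∞ χ`, and the tails `∫_t^∞ χ` of
the convergent integral are bounded by `∫_1^∞ χ` and tend to `0`.
-/

namespace ORClass

variable {χ : ℝ → ℝ}

theorem ae_nonneg_restrict_Ici (hχ : ORClass χ) {t : ℝ} (ht : 1 ≤ t) :
    0 ≤ᵐ[volume.restrict (Ici t)] χ :=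
  ae_restrict_of_forall_mem measurableSet_Ici fun s hs => (hχ.2.1 s (ht.trans hs)).le

theorem exists_le_mul_of_mem_Icc (hχ : ORClass χ) :
    ∃ a > 1, ∃ c > 0, ∀ t, 1 ≤ t → ∀ s ∈ Icc t (a * t), χ t ≤ c * χ s := by
  obtain ⟨-, hpos, a, ha, c, hc, hOR⟩ := hχ
  have hc0 : 0 < c := by linarith
  refine ⟨a, ha, c, hc0, fun t ht s hs => ?_⟩
  have ht0 : 0 < t := by linarith
  have h := (hOR t ht (s / t) ((one_le_div ht0).2 hs.1) ((div_le_iff₀ ht0).2 hs.2)).1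
  rwa [div_mul_cancel₀ s ht0.ne', le_div_iff₀ (hpos t ht), inv_mul_le_iff₀ hc0] at h

theorem exists_mul_le_integral_Ici (hχ : ORClass χ) (hint : IntegrableOn χ (Ici 1)) :
    ∃ K ≥ 0, ∀ t, 1 ≤ t → t * χ t ≤ K * ∫ s in Ici t, χ s := by
  obtain ⟨a, ha, c, hc, hlow⟩ := hχ.exists_le_mul_of_mem_Icc
  have ha1 : 0 < a - 1 := by linarith
  refine ⟨c / (a - 1), by positivity, fun t ht => ?_⟩
  have hta : t ≤ a * t := le_mul_of_one_le_left (by linarith) ha.le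
  have hint_t : IntegrableOn χ (Ici t) := hint.mono_set (Ici_subset_Ici.2 ht)
  have hwindow : (a - 1) * t * (χ t / c) ≤ ∫ s in t..a * t, χ s :=
    calc (a - 1) * t * (χ t / c) = ∫ _ in t..a * t, χ t / c := by
          rw [intervalIntegral.integral_const, smul_eq_mul]; ring
      _ ≤ ∫ s in t..a * t, χ s := by
          refine intervalIntegral.integral_mono_on hta intervalIntegrable_const
            (hint_t.mono_set ?_).intervalIntegrable fun s hs => ?_
          · rw [uIcc_of_le hta]; exact Icc_subset_Ici_self
          · exact (div_le_iff₀' hc).2 (hlow t ht s hs)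
  have htail : ∫ s in t..a * t, χ s ≤ ∫ s in Ici t, χ s := by
    rw [intervalIntegral.integral_of_le hta]
    exact setIntegral_mono_set hint_t (hχ.ae_nonneg_restrict_Ici ht)
      (Ioc_subset_Icc_self.trans Icc_subset_Ici_self).eventuallyLE
  calc t * χ t = c / (a - 1) * ((a - 1) * t * (χ t / c)) := by field_simp
    _ ≤ c / (a - 1) * ∫ s in Ici t, χ s := by gcongr; exact hwindow.trans htail

end ORClass

/-- If `χ ∈ OR` is Lebesgue integrable over `[1,∞)`, then `χ` is bounded on `[1,∞)`
and `t · χ(t) → 0` as `t → ∞`. -/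
theorem bounded_and_tendsto_zero_of_or_integrable (χ : ℝ → ℝ) (hχ : ORClass χ)
    (hint : IntegrableOn χ (Set.Ici (1 : ℝ))) :
    (∃ M : ℝ, ∀ t, 1 ≤ t → χ t ≤ M) ∧
      Tendsto (fun t => t * χ t) atTop (nhds 0) := by
  obtain ⟨K, hK0, hK⟩ := hχ.exists_mul_le_integral_Ici hint
  have hnonneg : ∀ t, 1 ≤ t → 0 ≤ t * χ t := fun t ht =>
    mul_nonneg (by linarith) (hχ.2.1 t ht).le
  refine ⟨⟨K * ∫ s in Ici 1, χ s, fun t ht => ?_⟩, ?_⟩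
  · calc χ t ≤ t * χ t := le_mul_of_one_le_left (hχ.2.1 t ht).le ht
      _ ≤ K * ∫ s in Ici t, χ s := hK t ht
      _ ≤ K * ∫ s in Ici 1, χ s := mul_le_mul_of_nonneg_left
          (setIntegral_mono_set hint (hχ.ae_nonneg_restrict_Ici le_rfl)
            (Ici_subset_Ici.2 ht).eventuallyLE) hK0
  · have htail : Tendsto (fun t => K * ∫ s in Ici t, χ s) atTop (nhds 0) := by
      simpa using (tendsto_integral_Ici_zero tendsto_id).const_mul K
    refine tendsto_of_tendsto_of_tendsto_of_le_of_le' tendsto_const_nhds htail ?_ ?_ <;>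
      filter_upwards [eventually_ge_atTop 1] with t ht
    exacts [hnonneg t ht, hK t ht]
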